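/- For every real α > 0 and every natural number n, the wavelet admissibility constant of the Daubechies–Paul mother wavelet ψ_n^α equals C_{ψ_n^α} = 2π ∫_0^∞ ξ^{-1} (ξ^{α/2} e^{-ξ} L_n^α(2ξ))² dξ = 2π Γ(n+α+1)/(2^α · n! · α); in particular the integral is finite, so ψ_n^α is admissible. -/

import Mathlib

open Real MeasureTheory

/-- The generalized Laguerre function given by the Rodrigues formula
`L_n^α(t) = (t^{-α} e^t / n!) · (d/dt)^n (e^{-t} t^{α+n})`. -/
noncomputable def lag (α : ℝ) (n : ℕ) (t : ℝ) : ℝ :=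
  t ^ (-α) * Real.exp t / n.factorial *
    iteratedDeriv n (fun s : ℝ => Real.exp (-s) * s ^ (α + n)) t

/-- The Fourier-side profile of the Daubechies–Paul mother wavelet:
`(Fψ_n^α)(ξ) = ξ^{α/2} e^{-ξ} L_n^α(2ξ)` for `ξ > 0`. -/
noncomputable def dpProfile (α : ℝ) (n : ℕ) (ξ : ℝ) : ℝ :=
  ξ ^ (α / 2) * Real.exp (-ξ) * lag α n (2 * ξ)

/-! Leibniz's rule applied to the Rodrigues formula gives `L_n^α(t) = ∑ᵢ cᵢ tⁱ` with
`cᵢ = (-1)ⁱ C(n,i) Γ(n+α+1) / (n! Γ(i+α+1))`. After `t = 2ξ` the admissibility integral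
becomes `2^{-α} ∫₀^∞ t^{α-1} e^{-t} L_n^α(t)² dt = 2^{-α} ∑_{j,k} c_j c_k Γ(α+j+k)`.
For `j ≥ 1`, `∑ₖ cₖ Γ(α+j+k)` is an `n`-th forward difference of a polynomial of degree
`j-1 < n`, so it vanishes; for `j = 0` it is the `n`-th forward difference of `x ↦ x⁻¹` at `α`,
which yields `Γ(α)`. Hence only `c₀ Γ(α) = Γ(n+α+1) / (n! α)` survives. -/

open Finset Polynomial

theorem Real.Gamma_add_nat_eq_ascPochhammer_mul {x : ℝ} (hx : 0 < x) (k : ℕ) :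
    Gamma (x + k) = (ascPochhammer ℝ k).eval x * Gamma x := by
  induction k with
  | zero => simp
  | succ k ih =>
    rw [Nat.cast_succ, ← add_assoc, Gamma_add_one (by positivity), ih, ascPochhammer_succ_eval]
    ring

theorem descPochhammer_eval_mul_Gamma {α : ℝ} (hα : -1 < α) {n i : ℕ} (hi : i ≤ n) :
    (descPochhammer ℝ (n - i)).eval (α + n) * Gamma (α + i + 1) = Gamma (α + n + 1) := by
  have hshift : α + n - (n - i : ℕ) + 1 = α + i + 1 := by push_cast [Nat.cast_sub hi]; ring
  rw [descPochhammer_eval_eq_ascPochhammer, hshift,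
    ← Real.Gamma_add_nat_eq_ascPochhammer_mul (by linarith [(i.cast_nonneg : (0 : ℝ) ≤ i)])]
  push_cast [Nat.cast_sub hi]
  ring_nf

theorem iteratedDeriv_exp_neg_mul_rpow (β : ℝ) (n : ℕ) {t : ℝ} (ht : t ≠ 0) :
    iteratedDeriv n (fun s => exp (-s) * s ^ β) t =
      ∑ i ∈ range (n + 1), n.choose i * (-1) ^ i * (descPochhammer ℝ (n - i)).eval β *
        (exp (-t) * t ^ (β - (n - i : ℕ))) := by
  have hexp (i : ℕ) : iteratedDeriv i (fun s => exp (-s)) t = (-1) ^ i * exp (-t) := by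
    simpa using congr_fun (iteratedDeriv_exp_const_mul i (-1)) t
  rw [iteratedDeriv_fun_mul (by fun_prop) (contDiffAt_rpow_const_of_ne ht)]
  refine sum_congr rfl fun i _ => ?_
  rw [hexp, iteratedDeriv_eq_iterate, iter_deriv_rpow_const]
  ring

noncomputable def laguerreCoeff (α : ℝ) (n i : ℕ) : ℝ :=
  (-1) ^ i * n.choose i * Gamma (α + n + 1) / (n.factorial * Gamma (α + i + 1))

theorem lag_eq_sum_laguerreCoeff {α : ℝ} (hα : -1 < α) (n : ℕ) {t : ℝ} (ht : 0 < t) :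
    lag α n t = ∑ i ∈ range (n + 1), laguerreCoeff α n i * t ^ i := by
  rw [lag, iteratedDeriv_exp_neg_mul_rpow _ _ ht.ne', mul_sum]
  refine sum_congr rfl fun i hi => ?_
  have hin : i ≤ n := Nat.lt_succ_iff.mp (mem_range.mp hi)
  have hpow : t ^ (-α) * t ^ (α + n - (n - i : ℕ)) = t ^ i := by
    rw [← rpow_add ht, ← rpow_natCast]
    congr 1
    push_cast [Nat.cast_sub hin]
    ring
  have hexp : exp t * exp (-t) = 1 := by rw [← exp_add, add_neg_cancel, exp_zero]
  have hΓ : Gamma (α + i + 1) ≠ 0 :=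
    (Gamma_pos_of_pos (by linarith [(i.cast_nonneg : (0 : ℝ) ≤ i)])).ne'
  rw [laguerreCoeff, ← descPochhammer_eval_mul_Gamma hα hin, ← hpow]
  field_simp
  linear_combination (n.choose i * (descPochhammer ℝ (n - i)).eval (α + n)) * hexp

theorem sum_range_alternating_choose_mul_shift {R : Type*} [CommRing R] (f : R → R) (y : R)
    (n : ℕ) :
    ∑ k ∈ range (n + 1), (-1) ^ k * n.choose k * f (y + k) =
      (-1) ^ n * (fwdDiff 1)^[n] f y := by
  rw [fwdDiff_iter_eq_sum_shift, mul_sum]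
  refine sum_congr rfl fun k hk => ?_
  have hsign : (-1 : R) ^ n * (-1) ^ (n - k) = (-1) ^ k := by
    rw [← pow_add, show n + (n - k) = k + 2 * (n - k) by grind, pow_add, pow_mul]
    simp
  rw [zsmul_eq_mul, nsmul_one]
  push_cast
  linear_combination -(n.choose k * f (y + k)) * hsign

theorem fwdDiff_iter_inv {y : ℝ} (hy : 0 < y) (n : ℕ) :
    (fwdDiff 1)^[n] (fun x : ℝ => x⁻¹) y =
      (-1) ^ n * n.factorial * Gamma y / Gamma (y + n + 1) := by
  induction n generalizing y with
  | zero =>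
    rw [Function.iterate_zero_apply, Nat.cast_zero, add_zero, Gamma_add_one hy.ne']
    field_simp [(Gamma_pos_of_pos hy).ne']
    simp
  | succ n ih =>
    have hΓ := (Gamma_pos_of_pos hy).ne'
    have hΓn : Gamma (y + n + 1) ≠ 0 := (Gamma_pos_of_pos (by positivity)).ne'
    have hy1 : Gamma (y + 1) = y * Gamma y := Gamma_add_one hy.ne'
    have hyn : Gamma (y + 1 + n + 1) = (y + n + 1) * Gamma (y + n + 1) := by
      rw [show y + 1 + n + 1 = (y + n + 1) + 1 by ring, Gamma_add_one (by positivity)]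
    rw [Function.iterate_succ_apply', fwdDiff, ih (by linarith), ih hy, hy1, hyn]
    push_cast
    rw [show y + (n + 1) + 1 = y + 1 + n + 1 by ring, hyn, Nat.factorial_succ]
    push_cast
    field_simp
    ring

theorem sum_laguerreCoeff_mul_Gamma_mul {α : ℝ} (hα : -1 < α) (n : ℕ) (f : ℝ → ℝ) :
    ∑ k ∈ range (n + 1), laguerreCoeff α n k * Gamma (α + k + 1) * f (α + k) =
      Gamma (α + n + 1) / n.factorial * ((-1) ^ n * (fwdDiff 1)^[n] f α) := by
  rw [← sum_range_alternating_choose_mul_shift, mul_sum]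
  refine sum_congr rfl fun k _ => ?_
  have hΓ : Gamma (α + k + 1) ≠ 0 :=
    (Gamma_pos_of_pos (by linarith [(k.cast_nonneg : (0 : ℝ) ≤ k)])).ne'
  rw [laguerreCoeff]
  field_simp

theorem sum_laguerreCoeff_mul_Gamma {α : ℝ} (hα : 0 < α) (n : ℕ) :
    ∑ k ∈ range (n + 1), laguerreCoeff α n k * Gamma (α + k) = Gamma α := by
  have hterm (k : ℕ) : laguerreCoeff α n k * Gamma (α + k) =
      laguerreCoeff α n k * Gamma (α + k + 1) * (α + k)⁻¹ := by
    rw [Gamma_add_one (by positivity)]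
    field_simp
  rw [sum_congr rfl fun k _ => hterm k, sum_laguerreCoeff_mul_Gamma_mul (by linarith),
    fwdDiff_iter_inv hα]
  have hsign : (-1 : ℝ) ^ n * (-1) ^ n = 1 := by rw [← mul_pow]; norm_num
  have hΓ : Gamma (α + n + 1) ≠ 0 := (Gamma_pos_of_pos (by positivity)).ne'
  rw [mul_div_assoc, mul_assoc, ← mul_assoc ((-1 : ℝ) ^ n), hsign, one_mul]
  field_simp

theorem sum_laguerreCoeff_mul_Gamma_add_eq_zero {α : ℝ} (hα : -1 < α) {n j : ℕ} (hj : 0 < j)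
    (hjn : j ≤ n) : ∑ k ∈ range (n + 1), laguerreCoeff α n k * Gamma (α + j + k) = 0 := by
  set P : ℝ[X] := (ascPochhammer ℝ (j - 1)).comp (X + C 1)
  have hP : P.natDegree < n := by
    rw [natDegree_comp, ascPochhammer_natDegree, natDegree_X_add_C]
    omega
  have hterm (k : ℕ) : laguerreCoeff α n k * Gamma (α + j + k) =
      laguerreCoeff α n k * Gamma (α + k + 1) * P.eval (α + k) := by
    have hpos : 0 < α + k + 1 := by linarith [(k.cast_nonneg : (0 : ℝ) ≤ k)]
    rw [show α + j + k = α + k + 1 + (j - 1 : ℕ) by push_cast [Nat.cast_sub hj]; ring,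
      Real.Gamma_add_nat_eq_ascPochhammer_mul hpos]
    simp only [P, eval_comp, eval_add, eval_X, eval_C]
    ring
  rw [sum_congr rfl fun k _ => hterm k, sum_laguerreCoeff_mul_Gamma_mul hα n (P.eval ·),
    Polynomial.fwdDiff_iter_eq_zero_of_degree_lt hP, Pi.zero_apply, mul_zero, mul_zero]

theorem sum_sum_laguerreCoeff_mul_Gamma {α : ℝ} (hα : 0 < α) (n : ℕ) :
    ∑ j ∈ range (n + 1), ∑ k ∈ range (n + 1),
      laguerreCoeff α n j * laguerreCoeff α n k * Gamma (α + j + k) =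
        Gamma (α + n + 1) / (n.factorial * α) := by
  simp_rw [mul_assoc, ← mul_sum]
  rw [sum_eq_single 0 (fun j hj hj0 => ?_) (by simp)]
  · have hΓ : Gamma α ≠ 0 := (Gamma_pos_of_pos hα).ne'
    simp only [Nat.cast_zero, add_zero]
    rw [sum_laguerreCoeff_mul_Gamma hα, laguerreCoeff]
    simp only [pow_zero, Nat.choose_zero_right, Nat.cast_one, Nat.cast_zero, one_mul, add_zero]
    rw [Gamma_add_one hα.ne']
    field_simp
  · rw [sum_laguerreCoeff_mul_Gamma_add_eq_zero (by linarith) (Nat.pos_of_ne_zero hj0)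
      (Nat.lt_succ_iff.mp (mem_range.mp hj)), mul_zero]

theorem rpow_mul_exp_neg_mul_sum_mul_sum {s t : ℝ} (ht : 0 < t) (a b : ℕ → ℝ) (N : ℕ) :
    t ^ (s - 1) * exp (-t) * ((∑ i ∈ range N, a i * t ^ i) * ∑ j ∈ range N, b j * t ^ j) =
      ∑ i ∈ range N, ∑ j ∈ range N, a i * b j * (exp (-t) * t ^ (s + i + j - 1)) := by
  rw [sum_mul_sum, mul_sum]
  refine sum_congr rfl fun i _ => ?_
  rw [mul_sum]
  refine sum_congr rfl fun j _ => ?_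
  rw [show s + i + j - 1 = s - 1 + i + j by ring, rpow_add ht, rpow_add ht, rpow_natCast,
    rpow_natCast]
  ring

theorem integrableOn_rpow_mul_exp_neg_mul_sum_mul_sum {s : ℝ} (hs : 0 < s) (a b : ℕ → ℝ)
    (N : ℕ) :
    IntegrableOn (fun t => t ^ (s - 1) * exp (-t) *
      ((∑ i ∈ range N, a i * t ^ i) * ∑ j ∈ range N, b j * t ^ j)) (Set.Ioi 0) := by
  refine IntegrableOn.congr_fun ?_
    (fun t ht => (rpow_mul_exp_neg_mul_sum_mul_sum ht a b N).symm) measurableSet_Ioi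
  exact integrable_finsetSum _ fun i _ => integrable_finsetSum _ fun j _ =>
    (GammaIntegral_convergent (by positivity)).const_mul _

theorem integral_rpow_mul_exp_neg_mul_sum_mul_sum {s : ℝ} (hs : 0 < s) (a b : ℕ → ℝ) (N : ℕ) :
    ∫ t in Set.Ioi 0, t ^ (s - 1) * exp (-t) *
      ((∑ i ∈ range N, a i * t ^ i) * ∑ j ∈ range N, b j * t ^ j) =
        ∑ i ∈ range N, ∑ j ∈ range N, a i * b j * Gamma (s + i + j) := by
  have hint (i j : ℕ) : IntegrableOn (fun t => a i * b j * (exp (-t) * t ^ (s + i + j - 1)))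
      (Set.Ioi 0) := (GammaIntegral_convergent (by positivity)).const_mul _
  rw [setIntegral_congr_fun measurableSet_Ioi
      fun t ht => rpow_mul_exp_neg_mul_sum_mul_sum ht a b N,
    integral_finsetSum _ fun i _ => integrable_finsetSum _ fun j _ => hint i j]
  refine sum_congr rfl fun i _ => ?_
  rw [integral_finsetSum _ fun j _ => hint i j]
  refine sum_congr rfl fun j _ => ?_
  rw [integral_const_mul, ← Gamma_eq_integral (by positivity)]

theorem integrableOn_and_integral_rpow_mul_exp_neg_mul_lag_sq {α : ℝ} (hα : 0 < α) (n : ℕ) :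
    IntegrableOn (fun t => t ^ (α - 1) * exp (-t) * lag α n t ^ 2) (Set.Ioi 0) ∧
      ∫ t in Set.Ioi 0, t ^ (α - 1) * exp (-t) * lag α n t ^ 2 =
        Gamma (α + n + 1) / (n.factorial * α) := by
  have hlag : Set.EqOn (fun t => t ^ (α - 1) * exp (-t) * lag α n t ^ 2)
      (fun t => t ^ (α - 1) * exp (-t) * ((∑ i ∈ range (n + 1), laguerreCoeff α n i * t ^ i) *
        ∑ j ∈ range (n + 1), laguerreCoeff α n j * t ^ j)) (Set.Ioi 0) := fun t ht => by
    simp only [sq, lag_eq_sum_laguerreCoeff (by linarith) n ht]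
  refine ⟨(integrableOn_rpow_mul_exp_neg_mul_sum_mul_sum hα _ _ _).congr_fun hlag.symm
    measurableSet_Ioi, ?_⟩
  rw [setIntegral_congr_fun measurableSet_Ioi hlag,
    integral_rpow_mul_exp_neg_mul_sum_mul_sum hα, sum_sum_laguerreCoeff_mul_Gamma hα]

theorem inv_mul_dpProfile_sq (α : ℝ) (n : ℕ) {ξ : ℝ} (hξ : 0 < ξ) :
    ξ⁻¹ * dpProfile α n ξ ^ 2 =
      2 ^ (1 - α) * ((2 * ξ) ^ (α - 1) * exp (-(2 * ξ)) * lag α n (2 * ξ) ^ 2) := by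
  have hsq : (ξ ^ (α / 2)) ^ 2 = ξ ^ α := by
    rw [← rpow_natCast, ← rpow_mul hξ.le]
    norm_num
  have hexp : exp (-ξ) ^ 2 = exp (-(2 * ξ)) := by
    rw [← exp_nat_mul]
    norm_num
  have htwo : (2 : ℝ) ^ (1 - α) * (2 * ξ) ^ (α - 1) = ξ ^ (α - 1) := by
    rw [mul_rpow two_pos.le hξ.le, ← mul_assoc, ← rpow_add two_pos]
    norm_num
  calc ξ⁻¹ * dpProfile α n ξ ^ 2 = ξ ^ α / ξ * exp (-(2 * ξ)) * lag α n (2 * ξ) ^ 2 := by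
        rw [dpProfile, ← hsq, ← hexp]
        ring
    _ = _ := by
        rw [← rpow_sub_one hξ.ne', ← htwo]
        ring

/-- The Daubechies–Paul wavelet is admissible, with admissibility constant
`C_{ψ_n^α} = 2π Γ(n+α+1) / (2^α n! α)`. -/
theorem dp_admissibility_constant (α : ℝ) (hα : 0 < α) (n : ℕ) :
    IntegrableOn (fun ξ : ℝ => ξ⁻¹ * dpProfile α n ξ ^ 2) (Set.Ioi (0 : ℝ)) ∧
      2 * π * ∫ ξ in Set.Ioi (0 : ℝ), ξ⁻¹ * dpProfile α n ξ ^ 2 =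
        2 * π * Real.Gamma (n + α + 1) / ((2 : ℝ) ^ α * n.factorial * α) := by
  set g : ℝ → ℝ := fun t => t ^ (α - 1) * exp (-t) * lag α n t ^ 2
  obtain ⟨hg_int, hg⟩ := integrableOn_and_integral_rpow_mul_exp_neg_mul_lag_sq hα n
  have hprofile : Set.EqOn (fun ξ => ξ⁻¹ * dpProfile α n ξ ^ 2)
      (fun ξ => 2 ^ (1 - α) * g (2 * ξ)) (Set.Ioi 0) := fun ξ hξ => inv_mul_dpProfile_sq α n hξ
  have hg_comp_int : IntegrableOn (fun ξ => g (2 * ξ)) (Set.Ioi 0) :=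
    (integrableOn_Ioi_comp_mul_left_iff g 0 two_pos).2 (by simpa using hg_int)
  refine ⟨IntegrableOn.congr_fun (hg_comp_int.const_mul _) hprofile.symm measurableSet_Ioi, ?_⟩
  rw [setIntegral_congr_fun measurableSet_Ioi hprofile, integral_const_mul,
    integral_comp_mul_left_Ioi g 0 two_pos, mul_zero, hg, smul_eq_mul, rpow_sub two_pos,
    rpow_one, add_comm (n : ℝ) α]
  field_simp
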